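/- arXiv:2212.13493 — 6 statements merged into one kernel-verified Lean document; each statement's English description precedes it below -/
import Mathlib

section
/- Let φ : [0,∞) → [0,∞) be an increasing bijection whose inverse φ⁻¹ is almost semi-multiplicative. Then the function η(t) = t / φ⁻¹(1/t) is an increasing bijection of (0,∞) onto itself, and for every constant a > 0 there exist c₁, c₂ > 0 such that c₁·η(t) ≤ η(a·t) ≤ c₂·η(t) for all t > 0. -/
/-!
On `[0, ∞)` the inverse `ψ = φ⁻¹` is strictly increasing and positive away from `0`, and it maps
`(0, ∞)` onto itself, so it is continuous there. Hence `η(t) = t / ψ(1/t)` is the quotient of an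
increasing and a decreasing positive continuous function. Comparing `η(t)` with `t / ψ(1)` on either
side of `t = 1` shows that `η` runs from `0` to `∞`, and the intermediate value theorem gives
surjectivity. The two-sided estimate comes from applying almost semi-multiplicativity to the
products `(1/a)·(1/t) = 1/(at)` and `a·(1/(at)) = 1/t`.
-/

open Set

section LeftInverse

variable {φ ψ : ℝ → ℝ}

theorem strictMonoOn_Ici_of_leftInverse (hφ : StrictMonoOn φ (Ici 0))
    (hsurj : ∀ y : ℝ, 0 ≤ y → ∃ t : ℝ, 0 ≤ t ∧ φ t = y) (hinv : ∀ t : ℝ, 0 ≤ t → ψ (φ t) = t) :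
    StrictMonoOn ψ (Ici 0) := by
  intro x hx y hy hxy
  obtain ⟨s, hs, rfl⟩ := hsurj x hx
  obtain ⟨t, ht, rfl⟩ := hsurj y hy
  rw [hinv s hs, hinv t ht]
  exact (hφ.lt_iff_lt hs ht).1 hxy

theorem pos_of_leftInverse (hφ0 : φ 0 = 0) (hsurj : ∀ y : ℝ, 0 ≤ y → ∃ t : ℝ, 0 ≤ t ∧ φ t = y)
    (hinv : ∀ t : ℝ, 0 ≤ t → ψ (φ t) = t) {y : ℝ} (hy : 0 < y) : 0 < ψ y := by
  obtain ⟨t, ht, rfl⟩ := hsurj y hy.le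
  rw [hinv t ht]
  refine ht.lt_of_ne ?_
  rintro rfl
  exact hy.ne' hφ0

theorem continuousOn_Ioi_of_leftInverse (hφ0 : φ 0 = 0) (hφ : StrictMonoOn φ (Ici 0))
    (hsurj : ∀ y : ℝ, 0 ≤ y → ∃ t : ℝ, 0 ≤ t ∧ φ t = y) (hinv : ∀ t : ℝ, 0 ≤ t → ψ (φ t) = t) :
    ContinuousOn ψ (Ioi 0) := by
  intro x hx
  have hψ := (strictMonoOn_Ici_of_leftInverse hφ hsurj hinv).mono Ioi_subset_Ici_self
  have himage : Ioi 0 ⊆ ψ '' Ioi 0 := by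
    intro y hy
    have hφy : 0 < φ y := hφ0 ▸ hφ self_mem_Ici (mem_Ici.2 hy.le) hy
    exact ⟨φ y, hφy, hinv y hy.le⟩
  refine (hψ.continuousAt_of_image_mem_nhds (Ioi_mem_nhds hx) ?_).continuousWithinAt
  exact Filter.mem_of_superset (Ioi_mem_nhds (pos_of_leftInverse hφ0 hsurj hinv hx)) himage

end LeftInverse

noncomputable def eta (ψ : ℝ → ℝ) (t : ℝ) : ℝ := t / ψ (1 / t)

def AlmostSemiMultiplicative (ψ : ℝ → ℝ) : Prop :=
  ∃ c : ℝ, 0 < c ∧ ∀ t₁ t₂ : ℝ, 0 < t₁ → 0 < t₂ → ψ t₁ * ψ t₂ ≥ c * ψ (t₁ * t₂)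

section Eta

variable {ψ : ℝ → ℝ}

theorem eta_pos (hpos : ∀ x : ℝ, 0 < x → 0 < ψ x) {t : ℝ} (ht : 0 < t) : 0 < eta ψ t :=
  div_pos ht (hpos _ (one_div_pos.2 ht))

theorem strictMonoOn_eta (hψ : MonotoneOn ψ (Ioi 0)) (hpos : ∀ x : ℝ, 0 < x → 0 < ψ x) :
    StrictMonoOn (eta ψ) (Ioi 0) := by
  intro s (hs : 0 < s) t (ht : 0 < t) hst
  have hψ_le : ψ (1 / t) ≤ ψ (1 / s) :=
    hψ (one_div_pos.2 ht) (one_div_pos.2 hs) (one_div_le_one_div_of_le hs hst.le)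
  exact div_lt_div₀ hst hψ_le ht.le (hpos _ (one_div_pos.2 ht))

theorem continuousOn_eta (hcont : ContinuousOn ψ (Ioi 0)) (hpos : ∀ x : ℝ, 0 < x → 0 < ψ x) :
    ContinuousOn (eta ψ) (Ioi 0) := by
  have hinv : ContinuousOn (fun t : ℝ => 1 / t) (Ioi 0) :=
    continuousOn_const.div continuousOn_id fun t (ht : 0 < t) => ht.ne'
  have hmaps : MapsTo (fun t : ℝ => 1 / t) (Ioi 0) (Ioi 0) := fun t (ht : 0 < t) => one_div_pos.2 ht
  exact continuousOn_id.div (hcont.comp hinv hmaps)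
    fun t (ht : 0 < t) => (hpos _ (one_div_pos.2 ht)).ne'

theorem eta_le_div_of_le_one (hψ : MonotoneOn ψ (Ioi 0)) (hpos : ∀ x : ℝ, 0 < x → 0 < ψ x)
    {t : ℝ} (ht : 0 < t) (ht₁ : t ≤ 1) : eta ψ t ≤ t / ψ 1 := by
  have hψ_le : ψ 1 ≤ ψ (1 / t) := hψ (mem_Ioi.2 one_pos) (one_div_pos.2 ht) ((one_le_div ht).2 ht₁)
  exact div_le_div_of_nonneg_left ht.le (hpos 1 one_pos) hψ_le

theorem div_le_eta_of_one_le (hψ : MonotoneOn ψ (Ioi 0)) (hpos : ∀ x : ℝ, 0 < x → 0 < ψ x)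
    {t : ℝ} (ht₁ : 1 ≤ t) : t / ψ 1 ≤ eta ψ t := by
  have ht : 0 < t := one_pos.trans_le ht₁
  have hψ_le : ψ (1 / t) ≤ ψ 1 := hψ (one_div_pos.2 ht) (mem_Ioi.2 one_pos) ((div_le_one ht).2 ht₁)
  exact div_le_div_of_nonneg_left ht.le (hpos _ (one_div_pos.2 ht)) hψ_le

theorem surjOn_eta (hψ : MonotoneOn ψ (Ioi 0)) (hcont : ContinuousOn ψ (Ioi 0))
    (hpos : ∀ x : ℝ, 0 < x → 0 < ψ x) : SurjOn (eta ψ) (Ioi 0) (Ioi 0) := by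
  intro y (hy : 0 < y)
  have hψ1 := hpos 1 one_pos
  have hb : 0 < y * ψ 1 := mul_pos hy hψ1
  have hlow : eta ψ (min 1 (y * ψ 1)) ≤ y := calc
    eta ψ (min 1 (y * ψ 1)) ≤ min 1 (y * ψ 1) / ψ 1 :=
      eta_le_div_of_le_one hψ hpos (lt_min one_pos hb) (min_le_left _ _)
    _ ≤ y * ψ 1 / ψ 1 := div_le_div_of_nonneg_right (min_le_right _ _) hψ1.le
    _ = y := mul_div_cancel_right₀ y hψ1.ne'
  have hhigh : y ≤ eta ψ (max 1 (y * ψ 1)) := calc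
    y = y * ψ 1 / ψ 1 := (mul_div_cancel_right₀ y hψ1.ne').symm
    _ ≤ max 1 (y * ψ 1) / ψ 1 := div_le_div_of_nonneg_right (le_max_right _ _) hψ1.le
    _ ≤ eta ψ (max 1 (y * ψ 1)) := div_le_eta_of_one_le hψ hpos (le_max_left _ _)
  exact isPreconnected_Ioi.intermediate_value (lt_min one_pos hb)
    (one_pos.trans_le (le_max_left _ _)) (continuousOn_eta hcont hpos) ⟨hlow, hhigh⟩

theorem AlmostSemiMultiplicative.exists_eta_mul_bounds (hsm : AlmostSemiMultiplicative ψ)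
    (hpos : ∀ x : ℝ, 0 < x → 0 < ψ x) {a : ℝ} (ha : 0 < a) :
    ∃ c₁ c₂ : ℝ, 0 < c₁ ∧ 0 < c₂ ∧ ∀ t : ℝ, 0 < t →
      c₁ * eta ψ t ≤ eta ψ (a * t) ∧ eta ψ (a * t) ≤ c₂ * eta ψ t := by
  obtain ⟨c, hc, hmul⟩ := hsm
  have hψa := hpos a ha
  have hψa' := hpos _ (one_div_pos.2 ha)
  refine ⟨a * c / ψ (1 / a), a * ψ a / c, by positivity, by positivity, fun t ht => ?_⟩
  have hψt := hpos _ (one_div_pos.2 ht)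
  have hψat := hpos _ (one_div_pos.2 (mul_pos ha ht))
  constructor
  · have key := hmul (1 / a) (1 / t) (one_div_pos.2 ha) (one_div_pos.2 ht)
    rw [one_div_mul_one_div] at key
    calc a * c / ψ (1 / a) * eta ψ t = a * t / (ψ (1 / a) * ψ (1 / t) / c) := by
          unfold eta; field_simp
      _ ≤ eta ψ (a * t) :=
          div_le_div_of_nonneg_left (by positivity) hψat ((le_div_iff₀ hc).2 (by linarith))
  · have key := hmul a (1 / (a * t)) ha (one_div_pos.2 (mul_pos ha ht))
    rw [show a * (1 / (a * t)) = 1 / t by field_simp] at key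
    calc eta ψ (a * t) ≤ a * t / (c * ψ (1 / t) / ψ a) :=
          div_le_div_of_nonneg_left (by positivity) (by positivity)
            ((div_le_iff₀ hψa).2 (by linarith))
      _ = a * ψ a / c * eta ψ t := by unfold eta; field_simp

end Eta

theorem stmt_5_general (φ ψ : ℝ → ℝ)
    (hφ0 : φ 0 = 0)
    (hφmono : StrictMonoOn φ (Set.Ici 0))
    (hφsurj : ∀ y : ℝ, 0 ≤ y → ∃ t : ℝ, 0 ≤ t ∧ φ t = y)
    (hinv₁ : ∀ t : ℝ, 0 ≤ t → ψ (φ t) = t)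
    (hsm : ∃ c : ℝ, 0 < c ∧ ∀ t₁ t₂ : ℝ, 0 < t₁ → 0 < t₂ → ψ t₁ * ψ t₂ ≥ c * ψ (t₁ * t₂)) :
    (StrictMonoOn (fun t : ℝ => t / ψ (1 / t)) (Set.Ioi 0)) ∧
    (∀ t : ℝ, 0 < t → 0 < t / ψ (1 / t)) ∧
    (∀ y : ℝ, 0 < y → ∃ t : ℝ, 0 < t ∧ t / ψ (1 / t) = y) ∧
    (∀ a : ℝ, 0 < a → ∃ c₁ c₂ : ℝ, 0 < c₁ ∧ 0 < c₂ ∧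
      ∀ t : ℝ, 0 < t →
        c₁ * (t / ψ (1 / t)) ≤ a * t / ψ (1 / (a * t)) ∧
        a * t / ψ (1 / (a * t)) ≤ c₂ * (t / ψ (1 / t))) := by
  have hψmono : MonotoneOn ψ (Ioi 0) :=
    ((strictMonoOn_Ici_of_leftInverse hφmono hφsurj hinv₁).mono Ioi_subset_Ici_self).monotoneOn
  have hψpos : ∀ x : ℝ, 0 < x → 0 < ψ x := fun x hx => pos_of_leftInverse hφ0 hφsurj hinv₁ hx
  have hψcont := continuousOn_Ioi_of_leftInverse hφ0 hφmono hφsurj hinv₁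
  exact ⟨strictMonoOn_eta hψmono hψpos, fun t ht => eta_pos hψpos ht,
    fun y hy => surjOn_eta hψmono hψcont hψpos hy,
    fun a ha => AlmostSemiMultiplicative.exists_eta_mul_bounds hsm hψpos ha⟩

/-- If `φ : [0,∞) → [0,∞)` is an increasing bijection with almost semi-multiplicative
inverse `ψ = φ⁻¹`, then `η(t) = t/ψ(1/t)` is an increasing bijection of `(0,∞)` onto
itself and satisfies `c₁·η(t) ≤ η(a·t) ≤ c₂·η(t)`. -/
theorem stmt_5 (φ ψ : ℝ → ℝ)
    (hφ0 : φ 0 = 0)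
    (hφmono : StrictMonoOn φ (Set.Ici 0))
    (hφmaps : ∀ t : ℝ, 0 ≤ t → 0 ≤ φ t)
    (hφsurj : ∀ y : ℝ, 0 ≤ y → ∃ t : ℝ, 0 ≤ t ∧ φ t = y)
    (hinv₁ : ∀ t : ℝ, 0 ≤ t → ψ (φ t) = t)
    (hinv₂ : ∀ t : ℝ, 0 ≤ t → φ (ψ t) = t)
    (hsm : ∃ c : ℝ, 0 < c ∧ ∀ t₁ t₂ : ℝ, 0 < t₁ → 0 < t₂ → ψ t₁ * ψ t₂ ≥ c * ψ (t₁ * t₂)) :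
    (StrictMonoOn (fun t : ℝ => t / ψ (1 / t)) (Set.Ioi 0)) ∧
    (∀ t : ℝ, 0 < t → 0 < t / ψ (1 / t)) ∧
    (∀ y : ℝ, 0 < y → ∃ t : ℝ, 0 < t ∧ t / ψ (1 / t) = y) ∧
    (∀ a : ℝ, 0 < a → ∃ c₁ c₂ : ℝ, 0 < c₁ ∧ 0 < c₂ ∧
      ∀ t : ℝ, 0 < t →
        c₁ * (t / ψ (1 / t)) ≤ a * t / ψ (1 / (a * t)) ∧
        a * t / ψ (1 / (a * t)) ≤ c₂ * (t / ψ (1 / t))) :=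
  stmt_5_general φ ψ hφ0 hφmono hφsurj hinv₁ hsm
end

section
/- Let φ : (0,∞) → (0,∞) be an increasing bijection whose inverse φ⁻¹ is almost semi-multiplicative, and define η(t) = t/φ⁻¹(1/t). Then there is a constant C > 0 such that for all real numbers a > 0 and b > 0, η(a)·b ≥ C·η(a / η⁻¹(1/b)). -/
/-! If `ψ = φ⁻¹` satisfies `ψ t₁ ψ t₂ ≥ c ψ (t₁ t₂)`, then `η t = t / ψ (1/t)` is almost
super-multiplicative: `c η(x) η(y) ≤ η(x y)`. Taking `y = η⁻¹(1/b)`, so that `η(y) = 1/b`, and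
`x = a / y` gives the claim with `C = c`. -/

theorem const_mul_mul_le_of_almost_semimultiplicative {ψ η : ℝ → ℝ} {c : ℝ}
    (hψpos : ∀ t : ℝ, 0 < t → 0 < ψ t)
    (hsm : ∀ t₁ t₂ : ℝ, 0 < t₁ → 0 < t₂ → ψ t₁ * ψ t₂ ≥ c * ψ (t₁ * t₂))
    (hη : ∀ t : ℝ, 0 < t → η t = t / ψ (1 / t)) {x y : ℝ} (hx : 0 < x) (hy : 0 < y) :
    c * (η x * η y) ≤ η (x * y) := by
  have hψx := hψpos (1 / x) (by positivity)
  have hψy := hψpos (1 / y) (by positivity)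
  have hψxy := hψpos (1 / (x * y)) (by positivity)
  have hsub : c * ψ (1 / (x * y)) ≤ ψ (1 / x) * ψ (1 / y) := by
    simpa only [one_div_mul_one_div] using hsm (1 / x) (1 / y) (by positivity) (by positivity)
  rw [hη x hx, hη y hy, hη (x * y) (by positivity), div_mul_div_comm, ← mul_div_assoc,
    div_le_div_iff₀ (by positivity) hψxy]
  calc c * (x * y) * ψ (1 / (x * y)) = x * y * (c * ψ (1 / (x * y))) := by ring
    _ ≤ x * y * (ψ (1 / x) * ψ (1 / y)) := by gcongr

theorem stmt_8_general (ψ η ηinv : ℝ → ℝ)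
    (hψpos : ∀ t : ℝ, 0 < t → 0 < ψ t)
    (hsm : ∃ c : ℝ, 0 < c ∧ ∀ t₁ t₂ : ℝ, 0 < t₁ → 0 < t₂ → ψ t₁ * ψ t₂ ≥ c * ψ (t₁ * t₂))
    (hη : ∀ t : ℝ, 0 < t → η t = t / ψ (1 / t))
    (hηinv₂ : ∀ t : ℝ, 0 < t → η (ηinv t) = t)
    (hηinvpos : ∀ t : ℝ, 0 < t → 0 < ηinv t) :
    ∃ C : ℝ, 0 < C ∧ ∀ a b : ℝ, 0 < a → 0 < b →
      η a * b ≥ C * η (a / ηinv (1 / b)) := by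
  obtain ⟨c, hc, hsm⟩ := hsm
  refine ⟨c, hc, fun a b ha hb => ?_⟩
  set s := ηinv (1 / b)
  have hs : 0 < s := hηinvpos _ (by positivity)
  have hηs : η s = 1 / b := hηinv₂ _ (by positivity)
  have key := const_mul_mul_le_of_almost_semimultiplicative hψpos hsm hη (div_pos ha hs) hs
  rw [div_mul_cancel₀ a hs.ne', hηs] at key
  calc c * η (a / s) = c * (η (a / s) * (1 / b)) * b := by field_simp
    _ ≤ η a * b := by gcongr

/-- Lemma 3.5: there is `C > 0` such that `η(a)·b ≥ C·η(a/η⁻¹(1/b))` for all `a, b > 0`. -/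
theorem stmt_8 (φ ψ η ηinv : ℝ → ℝ)
    (hφmono : StrictMonoOn φ (Set.Ioi 0))
    (hφmaps : ∀ t : ℝ, 0 < t → 0 < φ t)
    (hφsurj : ∀ y : ℝ, 0 < y → ∃ t : ℝ, 0 < t ∧ φ t = y)
    (hinv₁ : ∀ t : ℝ, 0 < t → ψ (φ t) = t)
    (hinv₂ : ∀ t : ℝ, 0 < t → φ (ψ t) = t)
    (hψpos : ∀ t : ℝ, 0 < t → 0 < ψ t)
    (hsm : ∃ c : ℝ, 0 < c ∧ ∀ t₁ t₂ : ℝ, 0 < t₁ → 0 < t₂ → ψ t₁ * ψ t₂ ≥ c * ψ (t₁ * t₂))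
    (hη : ∀ t : ℝ, 0 < t → η t = t / ψ (1 / t))
    (hηinv₁ : ∀ t : ℝ, 0 < t → ηinv (η t) = t)
    (hηinv₂ : ∀ t : ℝ, 0 < t → η (ηinv t) = t)
    (hηinvpos : ∀ t : ℝ, 0 < t → 0 < ηinv t) :
    ∃ C : ℝ, 0 < C ∧ ∀ a b : ℝ, 0 < a → 0 < b →
      η a * b ≥ C * η (a / ηinv (1 / b)) :=
  stmt_8_general ψ η ηinv hψpos hsm hη hηinv₂ hηinvpos
end

section
/- Let φ : [0,∞) → [0,∞) be an increasing bijection, n ≥ 2, r₁ < r₂ positive reals, and 𝓕 ≥ 0. Then the function w(r) = ∫_{r₁}^{r} φ⁻¹((τⁿ − r₁ⁿ)·𝓕/(n·τ^{n−1})) dτ satisfies the radial ODE (1/r^{n−1})·d/dr(r^{n−1}·φ(w'(r))) = 𝓕 on (r₁, r₂) with initial conditions w(r₁) = 0 and w'(r₁) = 0. -/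
/-!
Inverting an order isomorphism of `[0,∞)` gives a continuous `φ⁻¹`, so the fundamental theorem of
calculus yields `w' = φ⁻¹(Φ)` with `Φ τ = (τⁿ − r₁ⁿ)𝓕/(nτ^{n−1})`. Then `r^{n−1} φ(w'(r)) = (rⁿ − r₁ⁿ)𝓕/n`,
whose derivative is `𝓕 r^{n−1}`.
-/

open Set

theorem StrictMonoOn.continuousOn_of_leftInvOn {α β : Type*} [LinearOrder α] [TopologicalSpace α]
    [OrderTopology α] [LinearOrder β] [TopologicalSpace β] [OrderTopology β]
    {s : Set α} {t : Set β} [s.OrdConnected] [t.OrdConnected] {φ : α → β} {ψ : β → α}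
    (hφ : StrictMonoOn φ s) (hmaps : MapsTo φ s t) (hsurj : SurjOn φ s t)
    (hinv : LeftInvOn ψ φ s) : ContinuousOn ψ t := by
  let e : s ≃o t := (hφ.orderIso φ s).trans (.setCongr _ _ (hsurj.image_eq_of_mapsTo hmaps))
  have hψ : t.domRestrict ψ = (↑) ∘ e.symm := funext fun y => by
    conv_lhs => rw [← e.apply_symm_apply y]
    exact hinv (e.symm y).2
  rw [continuousOn_iff_continuous_domRestrict, hψ]
  exact continuous_subtype_val.comp e.symm.continuous

theorem hasDerivAt_integral_of_continuousOn_Ici {E : Type*} [NormedAddCommGroup E]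
    [NormedSpace ℝ E] [CompleteSpace E] {g : ℝ → E} {a r : ℝ} (hg : ContinuousOn g (Ici a))
    (har : a < r) : HasDerivAt (fun u => ∫ τ in a..u, g τ) (g r) r :=
  intervalIntegral.integral_hasDerivAt_right
    ((hg.mono Icc_subset_Ici_self).intervalIntegrable_of_Icc har.le)
    ((hg.mono Ioi_subset_Ici_self).stronglyMeasurableAtFilter isOpen_Ioi r har)
    (hg.continuousAt (Ici_mem_nhds har))

/-- The flux `φ(w')` of the radial problem. -/
noncomputable def radialFlux (n : ℕ) (r₁ F τ : ℝ) : ℝ := (τ ^ n - r₁ ^ n) * F / (n * τ ^ (n - 1))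

theorem radialFlux_nonneg {n : ℕ} {r₁ F τ : ℝ} (hF : 0 ≤ F) (hr₁ : 0 ≤ r₁) (hτ : r₁ ≤ τ) :
    0 ≤ radialFlux n r₁ F τ := by
  have hpow : r₁ ^ n ≤ τ ^ n := pow_le_pow_left₀ hr₁ hτ n
  have hτ₀ : 0 ≤ τ := hr₁.trans hτ
  unfold radialFlux
  positivity

theorem continuousOn_radialFlux {n : ℕ} (hn : n ≠ 0) (r₁ F : ℝ) :
    ContinuousOn (radialFlux n r₁ F) (Ioi 0) :=
  ContinuousOn.div (by fun_prop) (by fun_prop) fun τ (hτ : 0 < τ) => by positivity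

theorem pow_mul_radialFlux (n : ℕ) (r₁ F : ℝ) {τ : ℝ} (hτ : τ ≠ 0) :
    τ ^ (n - 1) * radialFlux n r₁ F τ = (τ ^ n - r₁ ^ n) * F / n := by
  unfold radialFlux
  field_simp

theorem hasDerivAt_pow_mul_radialFlux {n : ℕ} (hn : n ≠ 0) (r₁ F : ℝ) {r : ℝ} (hr : r ≠ 0) :
    HasDerivAt (fun s => s ^ (n - 1) * radialFlux n r₁ F s) (F * r ^ (n - 1)) r := by
  have hd := (((hasDerivAt_pow n r).sub_const (r₁ ^ n)).mul_const F).div_const (n : ℝ)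
  have hn' : (n : ℝ) ≠ 0 := Nat.cast_ne_zero.2 hn
  refine (hd.congr_of_eventuallyEq ?_).congr_deriv (by field_simp)
  filter_upwards [isOpen_ne.mem_nhds hr] with s hs using pow_mul_radialFlux n r₁ F hs

theorem stmt_12_general (n : ℕ) (hn : 2 ≤ n) (φ ψ : ℝ → ℝ)
    (hφ0 : φ 0 = 0)
    (hφmono : StrictMonoOn φ (Set.Ici 0))
    (hφmaps : ∀ t : ℝ, 0 ≤ t → 0 ≤ φ t)
    (hφsurj : ∀ y : ℝ, 0 ≤ y → ∃ t : ℝ, 0 ≤ t ∧ φ t = y)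
    (hinv₁ : ∀ t : ℝ, 0 ≤ t → ψ (φ t) = t)
    (hinv₂ : ∀ t : ℝ, 0 ≤ t → φ (ψ t) = t)
    (F r₁ r₂ : ℝ) (hF : 0 ≤ F) (hr₁ : 0 < r₁)
    (w : ℝ → ℝ)
    (hw : ∀ r : ℝ, w r = ∫ τ in r₁..r, ψ ((τ ^ n - r₁ ^ n) * F / (n * τ ^ (n - 1)))) :
    w r₁ = 0 ∧
    ψ ((r₁ ^ n - r₁ ^ n) * F / (n * r₁ ^ (n - 1))) = 0 ∧
    ∀ r ∈ Set.Ioo r₁ r₂,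
      HasDerivAt w (ψ ((r ^ n - r₁ ^ n) * F / (n * r ^ (n - 1)))) r ∧
      HasDerivAt (fun s : ℝ => s ^ (n - 1) * φ (ψ ((s ^ n - r₁ ^ n) * F / (n * s ^ (n - 1)))))
        (F * r ^ (n - 1)) r := by
  have hn0 : n ≠ 0 := by omega
  have hψ : ContinuousOn ψ (Ici 0) := hφmono.continuousOn_of_leftInvOn
    (fun t ht => hφmaps t ht) (fun y hy => hφsurj y hy) (fun t ht => hinv₁ t ht)
  have hψflux : ContinuousOn (fun τ => ψ (radialFlux n r₁ F τ)) (Ici r₁) :=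
    hψ.comp ((continuousOn_radialFlux hn0 r₁ F).mono fun τ hτ => hr₁.trans_le hτ)
      fun τ hτ => radialFlux_nonneg hF hr₁.le hτ
  refine ⟨by simp [hw], by simpa [hφ0] using hinv₁ 0 le_rfl, fun r hr => ⟨?_, ?_⟩⟩
  · rw [show w = _ from funext hw]
    exact hasDerivAt_integral_of_continuousOn_Ici hψflux hr.1
  · refine (hasDerivAt_pow_mul_radialFlux hn0 r₁ F (hr₁.trans hr.1).ne').congr_of_eventuallyEq ?_
    filter_upwards [Ioi_mem_nhds hr.1] with s hs
    exact congrArg _ (hinv₂ _ (radialFlux_nonneg hF hr₁.le hs.le))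

/-- The function `w(r) = ∫_{r₁}^{r} φ⁻¹((τⁿ − r₁ⁿ)𝓕/(nτ^{n−1})) dτ` solves the
radial Cauchy problem `(1/r^{n−1})(r^{n−1}φ(w'))' = 𝓕`, `w(r₁) = w'(r₁) = 0`. -/
theorem stmt_12 (n : ℕ) (hn : 2 ≤ n) (φ ψ : ℝ → ℝ)
    (hφd : ContDiff ℝ 1 φ)
    (hφ0 : φ 0 = 0)
    (hφmono : StrictMonoOn φ (Set.Ici 0))
    (hφmaps : ∀ t : ℝ, 0 ≤ t → 0 ≤ φ t)
    (hφsurj : ∀ y : ℝ, 0 ≤ y → ∃ t : ℝ, 0 ≤ t ∧ φ t = y)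
    (hinv₁ : ∀ t : ℝ, 0 ≤ t → ψ (φ t) = t)
    (hinv₂ : ∀ t : ℝ, 0 ≤ t → φ (ψ t) = t)
    (F r₁ r₂ : ℝ) (hF : 0 ≤ F) (hr₁ : 0 < r₁) (hr₁₂ : r₁ < r₂)
    (w : ℝ → ℝ)
    (hw : ∀ r : ℝ, w r = ∫ τ in r₁..r, ψ ((τ ^ n - r₁ ^ n) * F / (n * τ ^ (n - 1)))) :
    w r₁ = 0 ∧
    ψ ((r₁ ^ n - r₁ ^ n) * F / (n * r₁ ^ (n - 1))) = 0 ∧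
    ∀ r ∈ Set.Ioo r₁ r₂,
      HasDerivAt w (ψ ((r ^ n - r₁ ^ n) * F / (n * r ^ (n - 1)))) r ∧
      HasDerivAt (fun s : ℝ => s ^ (n - 1) * φ (ψ ((s ^ n - r₁ ^ n) * F / (n * s ^ (n - 1)))))
        (F * r ^ (n - 1)) r :=
  stmt_12_general n hn φ ψ hφ0 hφmono hφmaps hφsurj hinv₁ hinv₂ F r₁ r₂ hF hr₁ w hw
end

section
/- Let φ : (0,∞) → (0,∞) be an increasing bijection whose inverse φ⁻¹ is almost semi-multiplicative, let n ≥ 2, σ > 1, and 0 < r₁ < r₂ ≤ σr₁, and let 𝓕 > 0. Then there is a constant C > 0 depending only on σ, n, φ such that ∫_{r₁}^{r₂} φ⁻¹((τⁿ − r₁ⁿ)𝓕/(nτ^{n−1})) dτ ≥ C·(r₂ − r₁)·φ⁻¹((r₂ − r₁)·𝓕). -/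
/-!
Write `u(τ) = (τⁿ - r₁ⁿ)𝓕 / (nτⁿ⁻¹) = (τ - r₁ⁿ/τⁿ⁻¹)·𝓕/n`. This is increasing in `τ`, and
`r₁ⁿ/τⁿ⁻¹ ≤ r₁` gives `u(τ) ≥ (τ - r₁)𝓕/n`. Hence the integrand `φ⁻¹ ∘ u` is increasing on
`(r₁, r₂]`, so the integral is at least `(r₂ - m)·φ⁻¹(u(m))` for the midpoint `m`, where
`u(m) ≥ (r₂ - r₁)𝓕/(2n)`. Semi-multiplicativity turns `φ⁻¹((r₂ - r₁)𝓕/(2n))` into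
`c·φ⁻¹((r₂ - r₁)𝓕)/φ⁻¹(2n)`, giving `C = c / (2φ⁻¹(2n))`.
-/

open Set MeasureTheory

lemma intervalIntegrable_of_monotoneOn_Ioc {f : ℝ → ℝ} {a b : ℝ} (hab : a ≤ b)
    (hf : MonotoneOn f (Ioc a b)) (hf₀ : ∀ x ∈ Ioc a b, 0 ≤ f x) :
    IntervalIntegrable f volume a b := by
  have hmono : MonotoneOn ((Ioi a).indicator f) (uIcc a b) := by
    rw [uIcc_of_le hab]
    intro x hx y hy hxy
    by_cases hax : a < x
    · rw [indicator_of_mem (mem_Ioi.2 hax), indicator_of_mem (mem_Ioi.2 (hax.trans_le hxy))]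
      exact hf ⟨hax, hx.2⟩ ⟨hax.trans_le hxy, hy.2⟩ hxy
    · rw [indicator_of_notMem (show x ∉ Ioi a from hax)]
      exact indicator_apply_nonneg fun hy₀ => hf₀ y ⟨hy₀, hy.2⟩
  refine (intervalIntegrable_congr fun x hx => ?_).mp hmono.intervalIntegrable
  rw [uIoc_of_le hab] at hx
  exact indicator_of_mem hx.1 f

lemma mul_le_intervalIntegral_of_monotoneOn_Ioc {f : ℝ → ℝ} {a m b : ℝ} (ham : a < m)
    (hmb : m ≤ b) (hf : MonotoneOn f (Ioc a b)) (hf₀ : ∀ x ∈ Ioc a b, 0 ≤ f x) :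
    (b - m) * f m ≤ ∫ x in a..b, f x := by
  have hint := intervalIntegrable_of_monotoneOn_Ioc (ham.le.trans hmb) hf hf₀
  have hint' : IntervalIntegrable f volume m b :=
    hint.mono_set <| by
      rw [uIcc_of_le hmb, uIcc_of_le (ham.le.trans hmb)]
      exact Icc_subset_Icc ham.le le_rfl
  calc (b - m) * f m = ∫ _ in m..b, f m := by simp
    _ ≤ ∫ x in m..b, f x :=
        intervalIntegral.integral_mono_on hmb intervalIntegrable_const hint'
          fun x hx => hf ⟨ham, hmb⟩ ⟨ham.trans_le hx.1, hx.2⟩ hx.1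
    _ ≤ ∫ x in a..b, f x :=
        intervalIntegral.integral_mono_interval ham.le hmb le_rfl
          ((ae_restrict_iff' measurableSet_Ioc).2 (ae_of_all _ hf₀)) hint

lemma StrictMonoOn.monotoneOn_of_rightInvOn {α β : Type*} [LinearOrder α] [LinearOrder β]
    {φ : α → β} {ψ : β → α} {s : Set α} {t : Set β} (hφ : StrictMonoOn φ s)
    (hψ : MapsTo ψ t s) (hinv : ∀ y ∈ t, φ (ψ y) = y) : MonotoneOn ψ t := by
  intro x hx y hy hxy
  by_contra! hlt
  have := hφ (hψ hy) (hψ hx) hlt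
  rw [hinv x hx, hinv y hy] at this
  exact hxy.not_gt this

lemma mul_div_le_apply_div_of_mul_le_mul {ψ : ℝ → ℝ} {c s a : ℝ}
    (hψ : ∀ t₁ t₂ : ℝ, 0 < t₁ → 0 < t₂ → ψ t₁ * ψ t₂ ≥ c * ψ (t₁ * t₂))
    (hs : 0 < s) (ha : 0 < a) (hψa : 0 < ψ a) : c * ψ s / ψ a ≤ ψ (s / a) := by
  rw [div_le_iff₀ hψa]
  simpa [div_mul_cancel₀ s ha.ne'] using hψ _ _ (div_pos hs ha) ha

lemma pow_sub_pow_mul_div_eq {n : ℕ} (hn : 1 ≤ n) {τ : ℝ} (hτ : τ ≠ 0) (r F : ℝ) :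
    (τ ^ n - r ^ n) * F / (n * τ ^ (n - 1)) = (τ - r ^ n / τ ^ (n - 1)) * (F / n) := by
  obtain ⟨k, rfl⟩ := Nat.exists_eq_add_of_le hn
  rw [Nat.add_sub_cancel_left]
  field_simp
  ring

lemma monotoneOn_pow_sub_pow_mul_div {n : ℕ} (hn : 1 ≤ n) {r F : ℝ} (hr : 0 ≤ r) (hF : 0 ≤ F) :
    MonotoneOn (fun τ : ℝ => (τ ^ n - r ^ n) * F / (n * τ ^ (n - 1))) (Ioi 0) := by
  intro x hx y hy hxy
  have hx : 0 < x := hx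
  simp only [pow_sub_pow_mul_div_eq hn hx.ne', pow_sub_pow_mul_div_eq hn (hx.trans_le hxy).ne']
  gcongr

lemma sub_mul_div_le_pow_sub_pow_mul_div {n : ℕ} (hn : 1 ≤ n) {r τ F : ℝ} (hr : 0 ≤ r)
    (hrτ : r ≤ τ) (hτ : 0 < τ) (hF : 0 ≤ F) :
    (τ - r) * F / n ≤ (τ ^ n - r ^ n) * F / (n * τ ^ (n - 1)) := by
  rw [pow_sub_pow_mul_div_eq hn hτ.ne', mul_div_assoc]
  gcongr
  rw [div_le_iff₀ (by positivity)]
  calc r ^ n = r * r ^ (n - 1) := by rw [← pow_succ', Nat.sub_add_cancel hn]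
    _ ≤ r * τ ^ (n - 1) := by gcongr

theorem stmt_14_general (n : ℕ) (hn : 2 ≤ n) (σ : ℝ) (φ ψ : ℝ → ℝ)
    (hφmono : StrictMonoOn φ (Set.Ioi 0))
    (hinv₂ : ∀ t : ℝ, 0 < t → φ (ψ t) = t)
    (hψpos : ∀ t : ℝ, 0 < t → 0 < ψ t)
    (hsm : ∃ c : ℝ, 0 < c ∧ ∀ t₁ t₂ : ℝ, 0 < t₁ → 0 < t₂ → ψ t₁ * ψ t₂ ≥ c * ψ (t₁ * t₂)) :
    ∃ C : ℝ, 0 < C ∧ ∀ F r₁ r₂ : ℝ, 0 < F → 0 < r₁ → r₁ < r₂ → r₂ ≤ σ * r₁ →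
      (∫ τ in r₁..r₂, ψ ((τ ^ n - r₁ ^ n) * F / (n * τ ^ (n - 1)))) ≥
        C * (r₂ - r₁) * ψ ((r₂ - r₁) * F) := by
  obtain ⟨c, hc, hψmul⟩ := hsm
  have hn₁ : 1 ≤ n := by omega
  have h2n : (0 : ℝ) < 2 * n := by positivity
  have hψmono : MonotoneOn ψ (Ioi 0) := hφmono.monotoneOn_of_rightInvOn hψpos hinv₂
  refine ⟨c / (2 * ψ (2 * n)), div_pos hc (mul_pos two_pos (hψpos _ h2n)), ?_⟩
  intro F r₁ r₂ hF hr₁ hr₁₂ _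
  set u : ℝ → ℝ := fun τ => (τ ^ n - r₁ ^ n) * F / (n * τ ^ (n - 1))
  have hu_ge : ∀ τ, r₁ ≤ τ → (τ - r₁) * F / n ≤ u τ := fun τ hτ =>
    sub_mul_div_le_pow_sub_pow_mul_div hn₁ hr₁.le hτ (hr₁.trans_le hτ) hF.le
  have hu_pos : ∀ τ ∈ Ioc r₁ r₂, 0 < u τ := fun τ hτ =>
    lt_of_lt_of_le (by have := sub_pos.2 hτ.1; positivity) (hu_ge τ hτ.1.le)
  have hψu_mono : MonotoneOn (fun τ => ψ (u τ)) (Ioc r₁ r₂) :=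
    hψmono.comp ((monotoneOn_pow_sub_pow_mul_div hn₁ hr₁.le hF.le).mono
      fun τ hτ => hr₁.trans hτ.1) hu_pos
  set m := (r₁ + r₂) / 2 with hm_def
  have hs : 0 < (r₂ - r₁) * F := mul_pos (sub_pos.2 hr₁₂) hF
  have hm : m ∈ Ioc r₁ r₂ := ⟨by linarith, by linarith⟩
  have hu_mid : (r₂ - r₁) * F / (2 * n) ≤ u m := by
    convert hu_ge m hm.1.le using 1
    ring
  calc c / (2 * ψ (2 * n)) * (r₂ - r₁) * ψ ((r₂ - r₁) * F)
      = (r₂ - m) * (c * ψ ((r₂ - r₁) * F) / ψ (2 * n)) := by ring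
    _ ≤ (r₂ - m) * ψ (u m) := by
        gcongr
        · linarith
        · exact (mul_div_le_apply_div_of_mul_le_mul hψmul hs h2n (hψpos _ h2n)).trans
            (hψmono (div_pos hs h2n) (hu_pos m hm) hu_mid)
    _ ≤ ∫ τ in r₁..r₂, ψ (u τ) :=
        mul_le_intervalIntegral_of_monotoneOn_Ioc hm.1 hm.2 hψu_mono
          fun τ hτ => (hψpos _ (hu_pos τ hτ)).le

/-- Estimate (pl3.3.2): `∫_{r₁}^{r₂} φ⁻¹((τⁿ−r₁ⁿ)𝓕/(nτ^{n−1})) dτ ≥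
C·(r₂−r₁)·φ⁻¹((r₂−r₁)𝓕)` with `C` depending only on `σ`, `n`, `φ`. -/
theorem stmt_14 (n : ℕ) (hn : 2 ≤ n) (σ : ℝ) (hσ : 1 < σ) (φ ψ : ℝ → ℝ)
    (hφmono : StrictMonoOn φ (Set.Ioi 0))
    (hφmaps : ∀ t : ℝ, 0 < t → 0 < φ t)
    (hφsurj : ∀ y : ℝ, 0 < y → ∃ t : ℝ, 0 < t ∧ φ t = y)
    (hinv₁ : ∀ t : ℝ, 0 < t → ψ (φ t) = t)
    (hinv₂ : ∀ t : ℝ, 0 < t → φ (ψ t) = t)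
    (hψpos : ∀ t : ℝ, 0 < t → 0 < ψ t)
    (hsm : ∃ c : ℝ, 0 < c ∧ ∀ t₁ t₂ : ℝ, 0 < t₁ → 0 < t₂ → ψ t₁ * ψ t₂ ≥ c * ψ (t₁ * t₂)) :
    ∃ C : ℝ, 0 < C ∧ ∀ F r₁ r₂ : ℝ, 0 < F → 0 < r₁ → r₁ < r₂ → r₂ ≤ σ * r₁ →
      (∫ τ in r₁..r₂, ψ ((τ ^ n - r₁ ^ n) * F / (n * τ ^ (n - 1)))) ≥
        C * (r₂ - r₁) * ψ ((r₂ - r₁) * F) :=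
  stmt_14_general n hn σ φ ψ hφmono hinv₂ hψpos hsm
end

section
/- Let g : (0,∞) → (0,∞) be almost semi-multiplicative and bounded above on every compact subset of (0,∞). Fix constants 0 < α < β. Then there exists a constant C > 0 such that whenever τ, t > 0 with τ/t ∈ [α, β], one has g(t) ≥ C·g(τ). -/
/-! Writing `τ = t · (τ/t)`, almost semi-multiplicativity gives
`c · g τ ≤ g t · g (τ/t) ≤ M · g t`, where `M` bounds `g` on the compact ratio window `[α, β]`. -/

theorem div_mul_le_of_mul_le_mul {g : ℝ → ℝ} {c M t s : ℝ} (hM : 0 < M) (ht : 0 ≤ g t)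
    (hs : g s ≤ M) (hmul : c * g (t * s) ≤ g t * g s) : c / M * g (t * s) ≤ g t := by
  rw [div_mul_eq_mul_div, div_le_iff₀ hM]
  calc c * g (t * s) ≤ g t * g s := hmul
    _ ≤ g t * M := mul_le_mul_of_nonneg_left hs ht

theorem stmt_15_general (g : ℝ → ℝ) (hg : ∀ t : ℝ, 0 < t → 0 < g t)
    (hsm : ∃ c : ℝ, 0 < c ∧ ∀ t₁ t₂ : ℝ, 0 < t₁ → 0 < t₂ → g t₁ * g t₂ ≥ c * g (t₁ * t₂))
    (hbd : ∀ K : Set ℝ, K ⊆ Set.Ioi 0 → IsCompact K → ∃ M : ℝ, ∀ x ∈ K, g x ≤ M)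
    (α β : ℝ) (hα : 0 < α) :
    ∃ C : ℝ, 0 < C ∧ ∀ τ t : ℝ, 0 < τ → 0 < t → α ≤ τ / t → τ / t ≤ β →
      g t ≥ C * g τ := by
  obtain ⟨c, hc, hsm⟩ := hsm
  obtain ⟨M, hM⟩ := hbd (Set.Icc α β) (fun x hx => hα.trans_le hx.1) isCompact_Icc
  have hM₁ : 0 < max M 1 := lt_max_of_lt_right one_pos
  refine ⟨c / max M 1, div_pos hc hM₁, fun τ t hτ ht hατ hτβ => ?_⟩
  have hratio : g (τ / t) ≤ max M 1 := (hM _ ⟨hατ, hτβ⟩).trans (le_max_left _ _)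
  have key := div_mul_le_of_mul_le_mul hM₁ (hg t ht).le hratio (hsm t _ ht (div_pos hτ ht))
  rwa [mul_div_cancel₀ τ ht.ne'] at key

/-- If `g` is almost semi-multiplicative and bounded above on compact subsets of `(0,∞)`,
then `g(t) ≥ C·g(τ)` whenever `τ/t ∈ [α, β]`. -/
theorem stmt_15 (g : ℝ → ℝ) (hg : ∀ t : ℝ, 0 < t → 0 < g t)
    (hsm : ∃ c : ℝ, 0 < c ∧ ∀ t₁ t₂ : ℝ, 0 < t₁ → 0 < t₂ → g t₁ * g t₂ ≥ c * g (t₁ * t₂))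
    (hbd : ∀ K : Set ℝ, K ⊆ Set.Ioi 0 → IsCompact K → ∃ M : ℝ, ∀ x ∈ K, g x ≤ M)
    (α β : ℝ) (hα : 0 < α) (hαβ : α < β) :
    ∃ C : ℝ, 0 < C ∧ ∀ τ t : ℝ, 0 < τ → 0 < t → α ≤ τ / t → τ / t ≤ β →
      g t ≥ C * g τ :=
  stmt_15_general g hg hsm hbd α β hα
end

section
/- Let p > 1 and ν ∈ ℝ, and suppose φ : (0,∞) → (0,∞) is an increasing bijection with φ(t) ~ t^{p−1}·(log t)^ν as t → ∞ (i.e., the ratio is bounded between two positive constants in a neighborhood of ∞). Then its inverse satisfies φ⁻¹(t) ~ t^{1/(p−1)}·(log t)^{−ν/(p−1)} as t → ∞. -/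
/-- Two functions are comparable at infinity: the ratio lies between two positive
constants in a neighborhood of infinity. -/
def AsympInfty (f h : ℝ → ℝ) : Prop :=
  ∃ c₁ c₂ T : ℝ, 0 < c₁ ∧ c₁ ≤ c₂ ∧ 0 < T ∧
    ∀ t : ℝ, T < t → c₁ * h t ≤ f t ∧ f t ≤ c₂ * h t

/-!
With `q = p - 1` and `g(t) = t^{1/q} (log t)^{-ν/q}`, write `f(x) = x^q (log x)^ν`. For every
constant `a > 0` one has `log (a g(t)) / log t → 1/q`, hence `f(a g(t)) / t → a^q (1/q)^ν`.
Choosing `a` with `c₂ a^q (1/q)^ν < 1` gives `φ(a g(t)) ≤ c₂ f(a g(t)) < t = φ(ψ(t))`, so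
`a g(t) < ψ(t)` by monotonicity; symmetrically `ψ(t) < b g(t)` for `b` with `c₁ b^q (1/q)^ν > 1`.
-/

open Filter Real Topology Set

theorem asympInfty_iff_eventually {f h : ℝ → ℝ} :
    AsympInfty f h ↔ ∃ c₁ c₂ : ℝ, 0 < c₁ ∧ c₁ ≤ c₂ ∧
      ∀ᶠ t in atTop, c₁ * h t ≤ f t ∧ f t ≤ c₂ * h t := by
  constructor
  · rintro ⟨c₁, c₂, T, hc₁, hc₁₂, -, hbound⟩
    exact ⟨c₁, c₂, hc₁, hc₁₂, (eventually_gt_atTop T).mono hbound⟩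
  · rintro ⟨c₁, c₂, hc₁, hc₁₂, hbound⟩
    obtain ⟨T, hT⟩ := eventually_atTop.1 hbound
    exact ⟨c₁, c₂, max T 1, hc₁, hc₁₂, by positivity,
      fun t ht => hT t ((le_max_left T 1).trans ht.le)⟩

theorem exists_pos_mul_rpow_eq {c q y : ℝ} (hc : 0 < c) (hq : q ≠ 0) (hy : 0 < y) :
    ∃ a : ℝ, 0 < a ∧ c * a ^ q = y :=
  ⟨(y / c) ^ q⁻¹, by positivity, by
    rw [rpow_inv_rpow (by positivity) hq, mul_div_cancel₀ y hc.ne']⟩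

noncomputable def powLog (α β t : ℝ) : ℝ := t ^ α * Real.log t ^ β

section powLog

variable {α β : ℝ}

theorem powLog_pos {t : ℝ} (ht : 1 < t) : 0 < powLog α β t :=
  mul_pos (rpow_pos_of_pos (one_pos.trans ht) α) (rpow_pos_of_pos (log_pos ht) β)

theorem tendsto_log_const_mul_powLog_div_log {a : ℝ} (ha : 0 < a) :
    Tendsto (fun t => Real.log (a * powLog α β t) / Real.log t) atTop (𝓝 α) := by
  have hloglog : Tendsto (fun t => Real.log (Real.log t) / Real.log t) atTop (𝓝 0) :=
    isLittleO_log_id_atTop.tendsto_div_nhds_zero.comp tendsto_log_atTop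
  have hlim : Tendsto (fun t => Real.log a * (Real.log t)⁻¹ +
      (α + β * (Real.log (Real.log t) / Real.log t))) atTop (𝓝 α) := by
    simpa using (tendsto_log_atTop.inv_tendsto_atTop.const_mul (Real.log a)).add
      (tendsto_const_nhds.add (hloglog.const_mul β))
  refine hlim.congr' ?_
  filter_upwards [eventually_gt_atTop 1] with t ht
  have ht₀ : 0 < t := one_pos.trans ht
  have hL : 0 < Real.log t := log_pos ht
  rw [log_mul ha.ne' (powLog_pos ht).ne', powLog,
    log_mul (rpow_pos_of_pos ht₀ α).ne' (rpow_pos_of_pos hL β).ne', log_rpow ht₀, log_rpow hL]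
  field_simp

theorem tendsto_powLog_atTop (hα : 0 < α) : Tendsto (powLog α β) atTop atTop := by
  have hratio := tendsto_log_const_mul_powLog_div_log (α := α) (β := β) one_pos
  simp only [one_mul] at hratio
  have hlog : Tendsto (fun t => Real.log t * (Real.log (powLog α β t) / Real.log t))
      atTop atTop :=
    tendsto_log_atTop.atTop_mul_pos hα hratio
  refine (tendsto_exp_atTop.comp hlog).congr' ?_
  filter_upwards [eventually_gt_atTop 1] with t ht
  rw [Function.comp_apply, mul_div_cancel₀ _ (log_pos ht).ne', exp_log (powLog_pos ht)]

theorem powLog_const_mul_powLog_one_div {q ν a t : ℝ} (hq : q ≠ 0) (ha : 0 < a) (ht : 1 < t)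
    (hw : 0 ≤ Real.log (a * powLog (1 / q) (-ν / q) t)) :
    powLog q ν (a * powLog (1 / q) (-ν / q) t) =
      a ^ q * (Real.log (a * powLog (1 / q) (-ν / q) t) / Real.log t) ^ ν * t := by
  have ht₀ : 0 < t := one_pos.trans ht
  have hL : 0 < Real.log t := log_pos ht
  set w := Real.log (a * powLog (1 / q) (-ν / q) t) / Real.log t
  have hpow : (a * powLog (1 / q) (-ν / q) t) ^ q = a ^ q * (t * Real.log t ^ (-ν)) := by
    rw [mul_rpow ha.le (powLog_pos ht).le, powLog,
      mul_rpow (rpow_pos_of_pos ht₀ _).le (rpow_pos_of_pos hL _).le,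
      ← rpow_mul ht₀.le, ← rpow_mul hL.le, one_div_mul_cancel hq, div_mul_cancel₀ _ hq, rpow_one]
  have hlog : Real.log (a * powLog (1 / q) (-ν / q) t) ^ ν = w ^ ν * Real.log t ^ ν := by
    rw [← mul_rpow (div_nonneg hw hL.le) hL.le, div_mul_cancel₀ _ hL.ne']
  have hcancel : Real.log t ^ (-ν) * Real.log t ^ ν = 1 := by
    rw [← rpow_add hL, neg_add_cancel, rpow_zero]
  calc powLog q ν (a * powLog (1 / q) (-ν / q) t)
      = a ^ q * w ^ ν * t * (Real.log t ^ (-ν) * Real.log t ^ ν) := by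
        rw [powLog, hpow, hlog]; ring
    _ = a ^ q * w ^ ν * t := by rw [hcancel, mul_one]

theorem tendsto_powLog_const_mul_powLog_one_div_div {q ν a : ℝ} (hq : 0 < q) (ha : 0 < a) :
    Tendsto (fun t => powLog q ν (a * powLog (1 / q) (-ν / q) t) / t) atTop
      (𝓝 (a ^ q * (1 / q) ^ ν)) := by
  have hw := tendsto_log_const_mul_powLog_div_log (α := 1 / q) (β := -ν / q) ha
  refine ((hw.rpow_const (Or.inl (by positivity))).const_mul (a ^ q)).congr' ?_
  have hlarge := (tendsto_powLog_atTop (α := 1 / q) (β := -ν / q) (by positivity)).const_mul_atTop ha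
  filter_upwards [eventually_gt_atTop 1, hlarge.eventually_ge_atTop 1] with t ht hx
  rw [powLog_const_mul_powLog_one_div hq.ne' ha ht (log_nonneg hx),
    mul_div_cancel_right₀ _ (one_pos.trans ht).ne']

end powLog

section Inverse

variable {φ ψ f x : ℝ → ℝ} {C L : ℝ}

theorem eventually_lt_of_tendsto_div_lt (hφ : StrictMonoOn φ (Ioi 0))
    (hinv : ∀ t, 0 < t → φ (ψ t) = t) (hψ : ∀ t, 0 < t → 0 < ψ t)
    (hφf : ∀ᶠ y in atTop, φ y ≤ C * f y) (hx : Tendsto x atTop atTop)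
    (hlim : Tendsto (fun t => f (x t) / t) atTop (𝓝 L)) (hL : C * L < 1) :
    ∀ᶠ t in atTop, x t < ψ t := by
  filter_upwards [eventually_gt_atTop 0, hx.eventually_gt_atTop 0, hx.eventually hφf,
    (hlim.const_mul C).eventually_lt_const hL] with t ht hxt hφxt hCt
  have hfx : C * f (x t) < t := by rwa [← mul_div_assoc, div_lt_one ht] at hCt
  refine (hφ.lt_iff_lt hxt (hψ t ht)).1 ?_
  rw [hinv t ht]
  exact hφxt.trans_lt hfx

theorem eventually_gt_of_tendsto_div_gt (hφ : StrictMonoOn φ (Ioi 0))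
    (hinv : ∀ t, 0 < t → φ (ψ t) = t) (hψ : ∀ t, 0 < t → 0 < ψ t)
    (hφf : ∀ᶠ y in atTop, C * f y ≤ φ y) (hx : Tendsto x atTop atTop)
    (hlim : Tendsto (fun t => f (x t) / t) atTop (𝓝 L)) (hL : 1 < C * L) :
    ∀ᶠ t in atTop, ψ t < x t := by
  filter_upwards [eventually_gt_atTop 0, hx.eventually_gt_atTop 0, hx.eventually hφf,
    (hlim.const_mul C).eventually_const_lt hL] with t ht hxt hφxt hCt
  have hfx : t < C * f (x t) := by rwa [← mul_div_assoc, one_lt_div ht] at hCt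
  refine (hφ.lt_iff_lt (hψ t ht) hxt).1 ?_
  rw [hinv t ht]
  exact hfx.trans_le hφxt

end Inverse

theorem stmt_17_general (p ν : ℝ) (hp : 1 < p) (φ ψ : ℝ → ℝ)
    (hφmono : StrictMonoOn φ (Set.Ioi 0))
    (hinv₂ : ∀ t : ℝ, 0 < t → φ (ψ t) = t)
    (hψpos : ∀ t : ℝ, 0 < t → 0 < ψ t)
    (hasymp : AsympInfty φ (fun t => t ^ (p - 1) * Real.log t ^ ν)) :
    AsympInfty ψ (fun t => t ^ (1 / (p - 1)) * Real.log t ^ (-ν / (p - 1))) := by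
  obtain ⟨c₁, c₂, hc₁, hc₁₂, hφ⟩ := asympInfty_iff_eventually.1 hasymp
  have hq : 0 < p - 1 := sub_pos.2 hp
  have hK : 0 < (1 / (p - 1)) ^ ν := by positivity
  obtain ⟨a, ha, haK⟩ := exists_pos_mul_rpow_eq (mul_pos (hc₁.trans_le hc₁₂) hK) hq.ne'
    (by norm_num : (0 : ℝ) < 1 / 2)
  obtain ⟨b, hb, hbK⟩ := exists_pos_mul_rpow_eq (mul_pos hc₁ hK) hq.ne' two_pos
  have hgrowth := tendsto_powLog_atTop (β := -ν / (p - 1)) (one_div_pos.2 hq)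
  have lower := eventually_lt_of_tendsto_div_lt hφmono hinv₂ hψpos (hφ.mono fun _ h => h.2)
    (hgrowth.const_mul_atTop ha) (tendsto_powLog_const_mul_powLog_one_div_div hq ha)
    (by linarith [mul_left_comm c₂ (a ^ (p - 1)) ((1 / (p - 1)) ^ ν)])
  have upper := eventually_gt_of_tendsto_div_gt hφmono hinv₂ hψpos (hφ.mono fun _ h => h.1)
    (hgrowth.const_mul_atTop hb) (tendsto_powLog_const_mul_powLog_one_div_div hq hb)
    (by linarith [mul_left_comm c₁ (b ^ (p - 1)) ((1 / (p - 1)) ^ ν)])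
  obtain ⟨t, hat, hbt, ht⟩ := (lower.and (upper.and (eventually_gt_atTop 1))).exists
  have hab : a ≤ b := le_of_mul_le_mul_right (hat.trans hbt).le (powLog_pos ht)
  exact asympInfty_iff_eventually.2 ⟨a, b, ha, hab,
    (lower.and upper).mono fun _ h => ⟨h.1.le, h.2.le⟩⟩

/-- If `φ(t) ~ t^{p−1}(log t)^ν` as `t → ∞`, then
`φ⁻¹(t) ~ t^{1/(p−1)}(log t)^{−ν/(p−1)}` as `t → ∞`. -/
theorem stmt_17 (p ν : ℝ) (hp : 1 < p) (φ ψ : ℝ → ℝ)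
    (hφmono : StrictMonoOn φ (Set.Ioi 0))
    (hφmaps : ∀ t : ℝ, 0 < t → 0 < φ t)
    (hφsurj : ∀ y : ℝ, 0 < y → ∃ t : ℝ, 0 < t ∧ φ t = y)
    (hinv₁ : ∀ t : ℝ, 0 < t → ψ (φ t) = t)
    (hinv₂ : ∀ t : ℝ, 0 < t → φ (ψ t) = t)
    (hψpos : ∀ t : ℝ, 0 < t → 0 < ψ t)
    (hasymp : AsympInfty φ (fun t => t ^ (p - 1) * Real.log t ^ ν)) :
    AsympInfty ψ (fun t => t ^ (1 / (p - 1)) * Real.log t ^ (-ν / (p - 1))) :=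
  stmt_17_general p ν hp φ ψ hφmono hinv₂ hψpos hasymp
end
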